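/- Under the blossom dynamics on a loop of m matched edges, the sum y_1(t) + y_m(t) converges to 1 as t → ∞, for every initial condition. -/
import Mathlib

open Filter

lemma tri_mulVec {m : ℕ} {A : Matrix (Fin m) (Fin m) ℝ}
    (hA : ∀ i j : Fin m,
      A i j = if i.val + 1 = j.val ∨ j.val + 1 = i.val then (1:ℝ)/2 else 0)
    (v : Fin m → ℝ) (i : Fin m) :
    A.mulVec v i =
      (if h : i.val + 1 < m then v ⟨i.val + 1, h⟩ / 2 else 0) +
      (if h : 0 < i.val then
        v ⟨i.val - 1, Nat.lt_of_le_of_lt (Nat.sub_le _ _) i.isLt⟩ / 2 else 0) := by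
  have hsplit : ∀ j : Fin m, A i j * v j =
      (if i.val + 1 = j.val then v j / 2 else 0) +
      (if j.val + 1 = i.val then v j / 2 else 0) := by
    intro j
    rw [hA]
    by_cases h1 : i.val + 1 = j.val
    · rw [if_pos (Or.inl h1), if_pos h1, if_neg (by omega)]; ring
    · by_cases h2 : j.val + 1 = i.val
      · rw [if_pos (Or.inr h2), if_neg h1, if_pos h2]; ring
      · rw [if_neg (by tauto), if_neg h1, if_neg h2]; ring
  have hmv : A.mulVec v i = ∑ j, A i j * v j := rfl
  rw [hmv, Finset.sum_congr rfl (fun j _ => hsplit j), Finset.sum_add_distrib]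
  congr 1
  · by_cases h : i.val + 1 < m
    · rw [dif_pos h, Finset.sum_eq_single (⟨i.val + 1, h⟩ : Fin m)]
      · rw [if_pos rfl]
      · intro c _ hc
        rw [if_neg (fun hx => hc (Fin.ext hx.symm))]
      · intro hc; exact absurd (Finset.mem_univ _) hc
    · rw [dif_neg h]
      apply Finset.sum_eq_zero
      intro c _
      rw [if_neg (by have := c.isLt; omega)]
  · by_cases h : 0 < i.val
    · rw [dif_pos h, Finset.sum_eq_single
        (⟨i.val - 1, Nat.lt_of_le_of_lt (Nat.sub_le _ _) i.isLt⟩ : Fin m)]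
      · rw [if_pos (by simp; omega)]
      · intro c _ hc
        rw [if_neg (fun hx => hc (Fin.ext (show c.val = i.val - 1 by omega)))]
      · intro hc; exact absurd (Finset.mem_univ _) hc
    · rw [dif_neg h]
      apply Finset.sum_eq_zero
      intro c _
      rw [if_neg (by omega)]

/-- symmetrized deviation, extended by zero outside `[0, m)`. -/
def Dfun (m : ℕ) (y : ℕ → Fin m → ℝ) (t : ℕ) (i : ℤ) : ℝ :=
  if h : 0 ≤ i ∧ i < (m:ℤ) ∧ 0 < m then
    y t ⟨i.toNat, by omega⟩ + y t ⟨m - 1 - i.toNat, by omega⟩ - 1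
  else 0

lemma Dfun_out {m : ℕ} (y : ℕ → Fin m → ℝ) (t : ℕ) {i : ℤ}
    (h : i < 0 ∨ (m:ℤ) ≤ i) : Dfun m y t i = 0 := by
  rw [Dfun, dif_neg (by omega)]

lemma Dfun_val {m : ℕ} (y : ℕ → Fin m → ℝ) (t : ℕ) (n : ℕ) (h : n < m) :
    Dfun m y t (n : ℤ) =
      y t ⟨n, h⟩ + y t ⟨m - 1 - n, by omega⟩ - 1 := by
  rw [Dfun, dif_pos (by omega)]
  simp

lemma ystep {m : ℕ} (hm : 2 ≤ m) {A : Matrix (Fin m) (Fin m) ℝ}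
    (hA : ∀ i j : Fin m,
      A i j = if i.val + 1 = j.val ∨ j.val + 1 = i.val then (1:ℝ)/2 else 0)
    {x : ℕ → ℝ} {b : ℕ → Fin m → ℝ}
    (hb : ∀ t (i : Fin m),
      b t i = if i.val = 0 then x t / 2
        else if i.val = m - 1 then (1 - x t) / 2 else 0)
    {y : ℕ → Fin m → ℝ}
    (hy : ∀ t, y (t + 1) = A.mulVec (y t) + b t)
    (t : ℕ) (n : ℕ) (hn : n < m) :
    y (t+1) ⟨n, hn⟩ =
      (if h : n + 1 < m then y t ⟨n + 1, h⟩ / 2 else 0) +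
      (if h : 0 < n then y t ⟨n - 1, by omega⟩ / 2 else 0) +
      (if n = 0 then x t / 2 else if n = m - 1 then (1 - x t) / 2 else 0) := by
  rw [hy t]
  show A.mulVec (y t) ⟨n, hn⟩ + b t ⟨n, hn⟩ = _
  rw [tri_mulVec hA, hb]

lemma Dfun_rec {m : ℕ} (hm : 2 ≤ m) {A : Matrix (Fin m) (Fin m) ℝ}
    (hA : ∀ i j : Fin m,
      A i j = if i.val + 1 = j.val ∨ j.val + 1 = i.val then (1:ℝ)/2 else 0)
    {x : ℕ → ℝ} {b : ℕ → Fin m → ℝ}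
    (hb : ∀ t (i : Fin m),
      b t i = if i.val = 0 then x t / 2
        else if i.val = m - 1 then (1 - x t) / 2 else 0)
    {y : ℕ → Fin m → ℝ}
    (hy : ∀ t, y (t + 1) = A.mulVec (y t) + b t)
    (t n : ℕ) (hn : n < m) :
    Dfun m y (t+1) (n:ℤ) = (Dfun m y t ((n:ℤ)-1) + Dfun m y t ((n:ℤ)+1))/2 := by
  rw [Dfun_val y (t+1) n hn, ystep hm hA hb hy t n hn,
      ystep hm hA hb hy t (m-1-n) (by omega)]
  by_cases h0 : n = 0
  · subst h0
    rw [show ((0:ℕ):ℤ) - 1 = (-1:ℤ) by norm_num,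
        Dfun_out y t (Or.inl (by norm_num))]
    have d2 : Dfun m y t (((0:ℕ):ℤ) + 1) = y t ⟨1, by omega⟩ + y t ⟨m-1-1, by omega⟩ - 1 := by
      exact (congrArg (Dfun m y t) (show (((0:ℕ):ℤ) + 1) = ((1:ℕ):ℤ) by norm_num)).trans
        (Dfun_val y t 1 (by omega))
    rw [d2]
    rw [dif_pos (show 0+1 < m by omega), dif_neg (lt_irrefl 0), if_pos rfl,
        dif_neg (show ¬(m-1-0+1 < m) by omega), dif_pos (show 0 < m-1-0 by omega),
        if_neg (by omega), if_pos (by omega)]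
    simp only [Nat.sub_zero, Nat.zero_add]
    ring
  · by_cases h1 : n = m - 1
    · subst h1
      rw [show ((m-1:ℕ):ℤ) - 1 = ((m-1-1:ℕ):ℤ) by omega,
          Dfun_val y t (m-1-1) (by omega),
          Dfun_out y t (i := ((m-1:ℕ):ℤ) + 1) (Or.inr (by omega))]
      rw [dif_neg (show ¬(m-1+1 < m) by omega), dif_pos (show 0 < m-1 by omega),
          if_neg h0, if_pos rfl,
          dif_pos (show m-1-(m-1)+1 < m by omega),
          dif_neg (show ¬(0 < m-1-(m-1)) by omega),
          if_pos (by omega)]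
      have e1 : y t ⟨m-1-(m-1)+1, by omega⟩ = y t ⟨m-1-(m-1-1), by omega⟩ := by
        congr 1 <;> exact Fin.ext (by simp; omega)
      rw [e1]
      ring
    · rw [show ((n:ℕ):ℤ) - 1 = ((n-1:ℕ):ℤ) by omega,
          Dfun_val y t (n-1) (by omega)]
      have d2 : Dfun m y t ((n:ℤ) + 1)
          = y t ⟨n+1, by omega⟩ + y t ⟨m-1-(n+1), by omega⟩ - 1 := by
        exact (congrArg (Dfun m y t) (show ((n:ℤ) + 1) = ((n+1:ℕ):ℤ) by omega)).trans
          (Dfun_val y t (n+1) (by omega))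
      rw [d2]
      rw [dif_pos (show n+1 < m by omega), dif_pos (show 0 < n by omega),
          if_neg h0, if_neg h1,
          dif_pos (show m-1-n+1 < m by omega),
          dif_pos (show 0 < m-1-n by omega),
          if_neg (by omega), if_neg (by omega)]
      have e1 : y t ⟨m-1-n+1, by omega⟩ = y t ⟨m-1-(n-1), by omega⟩ := by
        congr 1 <;> exact Fin.ext (by simp; omega)
      have e2 : y t ⟨m-1-n-1, by omega⟩ = y t ⟨m-1-(n+1), by omega⟩ := by
        congr 1 <;> exact Fin.ext (by simp; omega)
      rw [e1, e2]
      ring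

noncomputable def Cfun (m : ℕ) (hm : 0 < m) (y : ℕ → Fin m → ℝ) (t : ℕ) : ℝ :=
  Finset.univ.sup' ⟨⟨0, hm⟩, Finset.mem_univ _⟩
    (fun j : Fin m => |Dfun m y t (j.val : ℤ)|)

lemma le_Cfun {m : ℕ} (hm : 0 < m) (y : ℕ → Fin m → ℝ) (t : ℕ) (j : Fin m) :
    |Dfun m y t (j.val : ℤ)| ≤ Cfun m hm y t :=
  Finset.le_sup' (fun j : Fin m => |Dfun m y t (j.val : ℤ)|) (Finset.mem_univ j)

lemma Cfun_le {m : ℕ} (hm : 0 < m) (y : ℕ → Fin m → ℝ) (t : ℕ) {c : ℝ}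
    (h : ∀ j : Fin m, |Dfun m y t (j.val : ℤ)| ≤ c) : Cfun m hm y t ≤ c :=
  Finset.sup'_le _ _ (fun j _ => h j)

/-- Under the blossom loop dynamics, y_1(t) + y_m(t) → 1 as t → ∞, for every
initial condition and every sequence x(t). -/
theorem blossom_loop_endpoint_sum_tendsto_one (m : ℕ) (hm : 2 ≤ m)
    (A : Matrix (Fin m) (Fin m) ℝ)
    (hA : ∀ i j : Fin m,
      A i j = if i.val + 1 = j.val ∨ j.val + 1 = i.val then (1:ℝ)/2 else 0)
    (x : ℕ → ℝ) (b : ℕ → Fin m → ℝ)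
    (hb : ∀ t (i : Fin m),
      b t i = if i.val = 0 then x t / 2
        else if i.val = m - 1 then (1 - x t) / 2 else 0)
    (y : ℕ → Fin m → ℝ)
    (hy : ∀ t, y (t + 1) = A.mulVec (y t) + b t) :
    Tendsto (fun t : ℕ => y t ⟨0, by omega⟩ + y t ⟨m - 1, by omega⟩)
      atTop (nhds 1) := by
  have hm0 : 0 < m := by omega
  have hCub : ∀ t (i : ℤ), |Dfun m y t i| ≤ Cfun m hm0 y t := by
    intro t i
    by_cases h : 0 ≤ i ∧ i < (m:ℤ)
    · have := le_Cfun hm0 y t ⟨i.toNat, by omega⟩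
      simpa [Int.toNat_of_nonneg h.1] using this
    · rw [Dfun_out y t (by omega)]
      simpa using le_trans (abs_nonneg _) (le_Cfun hm0 y t ⟨0, hm0⟩)
  have hC0 : ∀ t, 0 ≤ Cfun m hm0 y t :=
    fun t => le_trans (abs_nonneg _) (hCub t 0)
  have habs2 : ∀ a c : ℝ, |(a + c)/2| ≤ (|a| + |c|)/2 := by
    intro a c
    rw [abs_div, abs_two]
    have := abs_add_le a c
    linarith
  have hstep : ∀ t, Cfun m hm0 y (t+1) ≤ Cfun m hm0 y t := by
    intro t
    apply Cfun_le
    intro j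
    rw [Dfun_rec hm hA hb hy t j.val j.isLt]
    have h1 := hCub t ((j.val:ℤ) - 1)
    have h2 := hCub t ((j.val:ℤ) + 1)
    have := habs2 (Dfun m y t ((j.val:ℤ) - 1)) (Dfun m y t ((j.val:ℤ) + 1))
    linarith
  have hanti : ∀ s t, s ≤ t → Cfun m hm0 y t ≤ Cfun m hm0 y s := by
    intro s t h
    induction t, h using Nat.le_induction with
    | base => exact le_refl _
    | succ n hn ih => exact le_trans (hstep n) ih
  have hP : ∀ k : ℕ, (0:ℝ) ≤ 1 - (1/2)^k := by
    intro k
    have : ((1:ℝ)/2)^k ≤ 1 := pow_le_one₀ (by norm_num) (by norm_num)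
    linarith
  have hQ : ∀ (t n s : ℕ), t + n ≤ s →
      |Dfun m y s ((n:ℤ) - 1)| ≤ (1 - (1/2:ℝ)^n) * Cfun m hm0 y t := by
    intro t n
    induction n with
    | zero =>
      intro s _
      rw [show ((0:ℕ):ℤ) - 1 = (-1:ℤ) by norm_num,
          Dfun_out y s (Or.inl (by norm_num))]
      simp
    | succ n ih =>
      intro s hs
      obtain ⟨s', rfl⟩ : ∃ s', s = s' + 1 := ⟨s - 1, by omega⟩
      have e : Dfun m y (s'+1) (((n+1:ℕ):ℤ) - 1) = Dfun m y (s'+1) ((n:ℕ):ℤ) :=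
        congrArg _ (by push_cast; ring)
      rw [e]
      by_cases hnm : n < m
      · rw [Dfun_rec hm hA hb hy s' n hnm]
        have h1 := ih s' (by omega)
        have h2 := hCub s' ((n:ℤ) + 1)
        have h3 : Cfun m hm0 y s' ≤ Cfun m hm0 y t := hanti t s' (by omega)
        have h4 := habs2 (Dfun m y s' ((n:ℤ) - 1)) (Dfun m y s' ((n:ℤ) + 1))
        have h5 : ((1/2:ℝ))^(n+1) = (1/2)^n * (1/2) := pow_succ _ _
        have h6 := hC0 s'
        nlinarith [hC0 t]
      · rw [Dfun_out y (s'+1) (by omega)]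
        simpa using mul_nonneg (hP (n+1)) (hC0 t)
  have hCm : ∀ t, Cfun m hm0 y (t + m) ≤ (1 - (1/2:ℝ)^m) * Cfun m hm0 y t := by
    intro t
    apply Cfun_le
    intro j
    have hj := hQ t (j.val + 1) (t + m) (by have := j.isLt; omega)
    have e : Dfun m y (t+m) (((j.val+1:ℕ):ℤ) - 1) = Dfun m y (t+m) ((j.val:ℕ):ℤ) :=
      congrArg _ (by push_cast; ring)
    rw [e] at hj
    refine le_trans hj ?_
    have hpw : (1/2:ℝ)^m ≤ (1/2)^(j.val+1) :=
      pow_le_pow_of_le_one (by norm_num) (by norm_num) (by have := j.isLt; omega)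
    nlinarith [hC0 t]
  have hCk : ∀ k, Cfun m hm0 y (k * m) ≤ (1 - (1/2:ℝ)^m)^k * Cfun m hm0 y 0 := by
    intro k
    induction k with
    | zero => simp
    | succ k ih =>
      have e : (k+1) * m = k*m + m := by ring
      rw [e]
      calc Cfun m hm0 y (k*m + m) ≤ (1 - (1/2:ℝ)^m) * Cfun m hm0 y (k*m) := hCm (k*m)
        _ ≤ (1 - (1/2:ℝ)^m) * ((1 - (1/2:ℝ)^m)^k * Cfun m hm0 y 0) :=
            mul_le_mul_of_nonneg_left ih (hP m)
        _ = (1 - (1/2:ℝ)^m)^(k+1) * Cfun m hm0 y 0 := by ring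
  have hr1 : 1 - (1/2:ℝ)^m < 1 := by
    have : (0:ℝ) < (1/2)^m := by positivity
    linarith
  have htend : Tendsto (fun k : ℕ => (1 - (1/2:ℝ)^m)^k * Cfun m hm0 y 0)
      atTop (nhds 0) := by
    simpa using (tendsto_pow_atTop_nhds_zero_of_lt_one (hP m) hr1).mul_const
      (Cfun m hm0 y 0)
  rw [Metric.tendsto_atTop]
  intro ε hε
  obtain ⟨k, hk⟩ := (htend.eventually_lt_const hε).exists
  refine ⟨k * m, fun t ht => ?_⟩
  have hD0 : Dfun m y t 0 = y t ⟨0, by omega⟩ + y t ⟨m - 1, by omega⟩ - 1 := by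
    have := Dfun_val y t 0 hm0
    simpa using this
  calc dist (y t ⟨0, by omega⟩ + y t ⟨m - 1, by omega⟩) 1
      = |Dfun m y t 0| := by rw [Real.dist_eq, hD0]
    _ ≤ Cfun m hm0 y t := hCub t 0
    _ ≤ Cfun m hm0 y (k * m) := hanti (k*m) t ht
    _ ≤ (1 - (1/2:ℝ)^m)^k * Cfun m hm0 y 0 := hCk k
    _ < ε := hk
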